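/- arXiv:0810.4072 — 4 statements merged into one kernel-verified Lean document; each statement's English description precedes it below -/
import Mathlib

section
/- Assume 0 < q ≤ p with p² + q² < 1, let g₀ be a normalized probability density, let T > 0 and N ∈ ℕ with N > T, and set Δt = T/N and r = 2/(1 − p² − q²). Then there exists a unique sequence φ̂₁^N, …, φ̂_N^N of bounded C¹ functions satisfying the semi-implicit scheme, and for j = 0, …, N−1 it is given explicitly by φ̂_{j+1}^N(ξ) = (r/Δt) ∫₁^∞ [Δt · φ̂_j^N(pτξ) φ̂_j^N(qτξ) + (1 − Δt) φ̂_j^N(τξ)] τ^{−r/Δt − 1} dτ for ξ ≠ 0, extended by continuity at ξ = 0. -/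
open MeasureTheory Real

/-- Fourier transform `f̂(ξ) = ∫ e^{-iξv} f(v) dv`. -/
noncomputable def ft (f : ℝ → ℝ) (ξ : ℝ) : ℂ :=
  ∫ v : ℝ, Complex.exp (-Complex.I * (ξ : ℂ) * (v : ℂ)) * (f v : ℂ)

/-- A probability density on `ℝ`. -/
def IsProbDensity (f : ℝ → ℝ) : Prop :=
  (∀ v, 0 ≤ f v) ∧ Integrable f ∧ (∫ v, f v) = 1

/-- A normalized probability density: unit mass, zero mean, unit second moment. -/
def IsNormalized (f : ℝ → ℝ) : Prop :=
  IsProbDensity f ∧ (∫ v, v * f v) = 0 ∧ (∫ v, v ^ 2 * f v) = 1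

/-- `S_{p,q}(δ) = p^{2+δ} + q^{2+δ} − 1 − ((2+δ)/2)(p² + q² − 1)`. -/
noncomputable def Spq (p q δ : ℝ) : ℝ :=
  p ^ (2 + δ) + q ^ (2 + δ) - 1 - ((2 + δ) / 2) * (p ^ 2 + q ^ 2 - 1)

/-- Solution of the Fourier-transformed dissipative Maxwell model. -/
def IsSolution (p q : ℝ) (f₀ : ℝ → ℝ) (f : ℝ → ℝ → ℝ) : Prop :=
  f 0 = f₀ ∧ (∀ t : ℝ, 0 ≤ t → IsProbDensity (f t)) ∧
  (∀ ξ t : ℝ, 0 < t →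
    HasDerivAt (fun s : ℝ => ft (f s) ξ)
      (ft (f t) (p * ξ) * ft (f t) (q * ξ) - ft (f t) ξ) t)

/-- Fourier transform of the scaled solution: `ĝ(ξ,t) = f̂(ξ e^{−(p²+q²−1)t/2}, t)`. -/
noncomputable def scaledFT (p q : ℝ) (f : ℝ → ℝ → ℝ) (ξ t : ℝ) : ℂ :=
  ft (f t) (ξ * Real.exp (-(p ^ 2 + q ^ 2 - 1) * t / 2))

/-- A stationary state: normalized density whose Fourier transform is C¹ away from 0
and satisfies `((1−p²−q²)/2) ξ ĝ′(ξ) + ĝ(pξ)ĝ(qξ) − ĝ(ξ) = 0`. -/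
def IsStationaryState (p q : ℝ) (g : ℝ → ℝ) : Prop :=
  IsNormalized g ∧ ∃ D : ℝ → ℂ,
    ContinuousOn D {ξ : ℝ | ξ ≠ 0} ∧
    (∀ ξ : ℝ, ξ ≠ 0 → HasDerivAt (ft g) (D ξ) ξ) ∧
    (∀ ξ : ℝ, (((1 - p ^ 2 - q ^ 2) / 2 : ℝ) : ℂ) * (ξ : ℂ) * D ξ
      + ft g (p * ξ) * ft g (q * ξ) - ft g ξ = 0)

/-- Fourier-based distance `d_α(u,w) = sup_ξ |u(ξ) − w(ξ)|/|ξ|^α`. -/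
noncomputable def dFour (α : ℝ) (u w : ℝ → ℂ) : ℝ :=
  ⨆ ξ : ℝ, ‖u ξ - w ξ‖ / |ξ| ^ α

/-- Fourier-side semi-implicit scheme with step `Δt = T/N`, `1/r = (1−p²−q²)/2`. -/
def FourierScheme (p q : ℝ) (u₀ : ℝ → ℂ) (T : ℝ) (N : ℕ) (φ : ℕ → ℝ → ℂ) : Prop :=
  φ 0 = u₀ ∧ ∀ j < N,
    ContDiff ℝ 1 (φ (j + 1)) ∧ (∃ M : ℝ, ∀ ξ, ‖φ (j + 1) ξ‖ ≤ M) ∧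
    ∀ ξ : ℝ, (φ (j + 1) ξ - φ j ξ) / ((T / (N : ℝ) : ℝ) : ℂ) =
      (((1 - p ^ 2 - q ^ 2) / 2 : ℝ) : ℂ) * (ξ : ℂ) * deriv (φ (j + 1)) ξ
      + φ j (p * ξ) * φ j (q * ξ) - φ j ξ

/-!
Each step of the scheme is the Euler equation `ξ w' = β (w - h)` with `β = r / Δt` and
`h = Δt φ̂ⱼ(p·) φ̂ⱼ(q·) + (1 - Δt) φ̂ⱼ`. The explicit integral is a bounded solution, and bounded
solutions are unique. Since `Δt < 1` makes `h` a convex combination, C¹ functions with values in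
the closed unit disc and bounded derivative stay in that class along the scheme, which starts
from the Fourier transform of a density with finite second moment.
-/

open Set Filter Topology
open scoped FourierTransform

structure IsAdmissible (u : ℝ → ℂ) : Prop where
  contDiff : ContDiff ℝ 1 u
  norm_le_one : ∀ x, ‖u x‖ ≤ 1
  bdd_deriv : ∃ C, ∀ x, ‖deriv u x‖ ≤ C

namespace IsAdmissible

variable {u v : ℝ → ℂ}

theorem differentiable (hu : IsAdmissible u) : Differentiable ℝ u :=
  hu.contDiff.differentiable one_ne_zero

theorem comp_const_mul (hu : IsAdmissible u) (c : ℝ) : IsAdmissible fun x => u (c * x) := by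
  obtain ⟨C, hC⟩ := hu.bdd_deriv
  refine ⟨hu.contDiff.comp (contDiff_const.mul contDiff_id), fun x => hu.norm_le_one _,
    |c| * C, fun x => ?_⟩
  rw [deriv_comp_mul_left c u x, norm_smul, Real.norm_eq_abs]
  exact mul_le_mul_of_nonneg_left (hC _) (abs_nonneg c)

theorem mul (hu : IsAdmissible u) (hv : IsAdmissible v) : IsAdmissible fun x => u x * v x := by
  obtain ⟨C, hC⟩ := hu.bdd_deriv
  obtain ⟨D, hD⟩ := hv.bdd_deriv
  refine ⟨hu.contDiff.mul hv.contDiff, fun x => ?_, C + D, fun x => ?_⟩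
  · rw [norm_mul]
    exact mul_le_one₀ (hu.norm_le_one x) (norm_nonneg _) (hv.norm_le_one x)
  · rw [deriv_fun_mul (hu.differentiable x) (hv.differentiable x)]
    refine (norm_add_le _ _).trans (add_le_add ?_ ?_) <;> rw [norm_mul]
    · exact (mul_le_mul (hC x) (hv.norm_le_one x) (norm_nonneg _)
        ((norm_nonneg _).trans (hC x))).trans_eq (mul_one C)
    · exact (mul_le_mul (hu.norm_le_one x) (hD x) (norm_nonneg _) zero_le_one).trans_eq
        (one_mul D)

theorem convexComb (hu : IsAdmissible u) (hv : IsAdmissible v) {Δ : ℝ} (hΔ0 : 0 ≤ Δ)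
    (hΔ1 : Δ ≤ 1) : IsAdmissible fun x => (Δ : ℂ) * u x + ((1 - Δ : ℝ) : ℂ) * v x := by
  obtain ⟨C, hC⟩ := hu.bdd_deriv
  obtain ⟨D, hD⟩ := hv.bdd_deriv
  have hΔ1' : 0 ≤ 1 - Δ := sub_nonneg.2 hΔ1
  refine ⟨(contDiff_const.mul hu.contDiff).add (contDiff_const.mul hv.contDiff), fun x => ?_,
    Δ * C + (1 - Δ) * D, fun x => ?_⟩
  · calc ‖(Δ : ℂ) * u x + ((1 - Δ : ℝ) : ℂ) * v x‖ ≤ Δ * 1 + (1 - Δ) * 1 := by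
          refine (norm_add_le _ _).trans (add_le_add ?_ ?_) <;>
            rw [norm_mul, Complex.norm_real, Real.norm_of_nonneg ‹_›]
          · exact mul_le_mul_of_nonneg_left (hu.norm_le_one x) hΔ0
          · exact mul_le_mul_of_nonneg_left (hv.norm_le_one x) hΔ1'
      _ = 1 := by ring
  · rw [deriv_fun_add ((hu.differentiable x).const_mul _) ((hv.differentiable x).const_mul _),
      deriv_const_mul _ (hu.differentiable x), deriv_const_mul _ (hv.differentiable x)]
    refine (norm_add_le _ _).trans (add_le_add ?_ ?_) <;>
      rw [norm_mul, Complex.norm_real, Real.norm_of_nonneg ‹_›]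
    · exact mul_le_mul_of_nonneg_left (hC x) hΔ0
    · exact mul_le_mul_of_nonneg_left (hD x) hΔ1'

end IsAdmissible

noncomputable def explicitTerm (p q Δ : ℝ) (u : ℝ → ℂ) (x : ℝ) : ℂ :=
  (Δ : ℂ) * (u (p * x) * u (q * x)) + ((1 - Δ : ℝ) : ℂ) * u x

theorem IsAdmissible.explicitTerm {u : ℝ → ℂ} (hu : IsAdmissible u) (p q : ℝ) {Δ : ℝ}
    (hΔ0 : 0 ≤ Δ) (hΔ1 : Δ ≤ 1) : IsAdmissible (explicitTerm p q Δ u) :=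
  ((hu.comp_const_mul p).mul (hu.comp_const_mul q)).convexComb hu hΔ0 hΔ1

section RpowKernel

variable {g : ℝ → ℂ} {B γ : ℝ}

theorem rpow_neg_eq_mul_rpow_neg_sub_one {τ : ℝ} (hτ : 0 < τ) (β : ℝ) :
    τ ^ (-β) = τ * τ ^ (-β - 1) := by
  rw [Real.rpow_sub_one hτ.ne', mul_div_cancel₀ _ hτ.ne']

theorem norm_mul_rpow_le {z : ℂ} {τ : ℝ} (hτ : 0 < τ) (hz : ‖z‖ ≤ B) :
    ‖z * ((τ ^ γ : ℝ) : ℂ)‖ ≤ B * τ ^ γ := by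
  rw [norm_mul, Complex.norm_real, Real.norm_of_nonneg (Real.rpow_nonneg hτ.le γ)]
  exact mul_le_mul_of_nonneg_right hz (Real.rpow_nonneg hτ.le γ)

theorem integral_Ioi_one_rpow (hγ : γ < -1) : ∫ τ in Ioi (1 : ℝ), τ ^ γ = (-γ - 1)⁻¹ := by
  rw [integral_Ioi_rpow_of_lt hγ one_pos, Real.one_rpow, neg_div, ← div_neg, one_div]
  ring_nf

theorem Measurable.comp_mul_rpow (hg : Measurable g) (ξ γ : ℝ) :
    Measurable fun τ : ℝ => g (τ * ξ) * ((τ ^ γ : ℝ) : ℂ) :=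
  (hg.comp (measurable_id.mul_const ξ)).mul (by fun_prop)

theorem ae_norm_comp_mul_rpow_le (hB : ∀ x, ‖g x‖ ≤ B) (ξ : ℝ) :
    ∀ᵐ τ ∂volume.restrict (Ioi 1), ‖g (τ * ξ) * ((τ ^ γ : ℝ) : ℂ)‖ ≤ B * τ ^ γ :=
  (ae_restrict_iff' measurableSet_Ioi).2 (Eventually.of_forall fun _ hτ =>
    norm_mul_rpow_le (one_pos.trans hτ) (hB _))

theorem integrableOn_Ioi_one_comp_mul_rpow (hγ : γ < -1) (hg : Measurable g)
    (hB : ∀ x, ‖g x‖ ≤ B) (ξ : ℝ) :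
    IntegrableOn (fun τ : ℝ => g (τ * ξ) * ((τ ^ γ : ℝ) : ℂ)) (Ioi 1) :=
  ((integrableOn_Ioi_rpow_of_lt hγ one_pos).const_mul B).mono'
    (hg.comp_mul_rpow ξ γ).aestronglyMeasurable (ae_norm_comp_mul_rpow_le hB ξ)

theorem norm_integral_Ioi_one_comp_mul_rpow_le (hγ : γ < -1) (hB : ∀ x, ‖g x‖ ≤ B) (ξ : ℝ) :
    ‖∫ τ in Ioi (1 : ℝ), g (τ * ξ) * ((τ ^ γ : ℝ) : ℂ)‖ ≤ B * (-γ - 1)⁻¹ := by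
  rw [← integral_Ioi_one_rpow hγ, ← integral_const_mul]
  exact norm_integral_le_of_norm_le ((integrableOn_Ioi_rpow_of_lt hγ one_pos).const_mul B)
    (ae_norm_comp_mul_rpow_le hB ξ)

end RpowKernel

/- For `ξ > 0`, substituting `s = τ ξ` turns this into `β ξ ^ β ∫_ξ^∞ h(s) s^(-β-1) ds`: the
variation-of-constants solution of `ξ w' = β (w - h)` that stays bounded. -/
noncomputable def eulerResolvent (β : ℝ) (h : ℝ → ℂ) (ξ : ℝ) : ℂ :=
  β * ∫ τ in Ioi (1 : ℝ), h (τ * ξ) * ((τ ^ (-β - 1) : ℝ) : ℂ)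

section EulerResolvent

variable {β M C : ℝ} {h : ℝ → ℂ}

theorem hasDerivAt_eulerResolvent (hβ : 1 < β) (hh : Differentiable ℝ h)
    (hM : ∀ x, ‖h x‖ ≤ M) (hC : ∀ x, ‖deriv h x‖ ≤ C) (ξ : ℝ) :
    HasDerivAt (eulerResolvent β h)
      (β * ∫ τ in Ioi (1 : ℝ), deriv h (τ * ξ) * ((τ ^ (-β) : ℝ) : ℂ)) ξ := by
  have hmeas x := hh.continuous.measurable.comp_mul_rpow x (-β - 1)
  refine ((hasDerivAt_integral_of_dominated_loc_of_deriv_le univ_mem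
    (Eventually.of_forall fun x => (hmeas x).aestronglyMeasurable)
    (integrableOn_Ioi_one_comp_mul_rpow (by linarith) hh.continuous.measurable hM ξ)
    (F' := fun x τ => deriv h (τ * x) * ((τ ^ (-β) : ℝ) : ℂ))
    ((measurable_deriv h).comp_mul_rpow ξ (-β)).aestronglyMeasurable
    (bound := fun τ => C * τ ^ (-β)) ?_
    ((integrableOn_Ioi_rpow_of_lt (by linarith) one_pos).const_mul C) ?_).2).const_mul _
  all_goals refine (ae_restrict_iff' measurableSet_Ioi).2 (Eventually.of_forall fun τ hτ x _ => ?_)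
  · exact norm_mul_rpow_le (one_pos.trans hτ) (hC _)
  · have hτ0 : (0 : ℝ) < τ := one_pos.trans hτ
    refine (((hh (τ * x)).hasDerivAt.scomp x (hasDerivAt_const_mul τ)).mul_const _).congr_deriv ?_
    rw [rpow_neg_eq_mul_rpow_neg_sub_one hτ0, Complex.real_smul, Complex.ofReal_mul]
    ring

theorem norm_eulerResolvent_le (hβ : 0 < β) (hM : ∀ x, ‖h x‖ ≤ M) (ξ : ℝ) :
    ‖eulerResolvent β h ξ‖ ≤ M := by
  have hI := norm_integral_Ioi_one_comp_mul_rpow_le (by linarith : -β - 1 < -1) hM ξ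
  rw [eulerResolvent, norm_mul, Complex.norm_real, Real.norm_of_nonneg hβ.le]
  calc _ ≤ β * (M * (-(-β - 1) - 1)⁻¹) := mul_le_mul_of_nonneg_left hI hβ.le
    _ = M := by rw [show -(-β - 1) - 1 = β by ring]; field_simp

theorem norm_deriv_eulerResolvent_le (hβ : 1 < β) (hh : Differentiable ℝ h)
    (hM : ∀ x, ‖h x‖ ≤ M) (hC : ∀ x, ‖deriv h x‖ ≤ C) (ξ : ℝ) :
    ‖deriv (eulerResolvent β h) ξ‖ ≤ β * (C * (β - 1)⁻¹) := by
  have hI := norm_integral_Ioi_one_comp_mul_rpow_le (by linarith : -β < -1) hC ξ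
  rw [(hasDerivAt_eulerResolvent hβ hh hM hC ξ).deriv, norm_mul, Complex.norm_real,
    Real.norm_of_nonneg (by linarith)]
  rw [neg_neg] at hI
  exact mul_le_mul_of_nonneg_left hI (by linarith)

theorem contDiff_eulerResolvent (hβ : 1 < β) (hh : ContDiff ℝ 1 h)
    (hM : ∀ x, ‖h x‖ ≤ M) (hC : ∀ x, ‖deriv h x‖ ≤ C) : ContDiff ℝ 1 (eulerResolvent β h) := by
  have hd := hh.differentiable one_ne_zero
  have hcont : Continuous (deriv h) := hh.continuous_deriv le_rfl
  refine contDiff_one_iff_deriv.2 ⟨fun ξ => (hasDerivAt_eulerResolvent hβ hd hM hC ξ)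
    |>.differentiableAt, ?_⟩
  rw [funext fun ξ => (hasDerivAt_eulerResolvent hβ hd hM hC ξ).deriv]
  exact continuous_const.mul (continuous_of_dominated
    (fun ξ => (hcont.measurable.comp_mul_rpow ξ (-β)).aestronglyMeasurable)
    (ae_norm_comp_mul_rpow_le hC) ((integrableOn_Ioi_rpow_of_lt (by linarith) one_pos).const_mul C)
    (Eventually.of_forall fun τ => by fun_prop))

theorem mul_integral_Ioi_one_comp_mul_rpow_eq (hβ : 1 < β) (hh : Differentiable ℝ h)
    (hM : ∀ x, ‖h x‖ ≤ M) (hC : ∀ x, ‖deriv h x‖ ≤ C) (ξ : ℝ) :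
    β * ∫ τ in Ioi (1 : ℝ), h (τ * ξ) * ((τ ^ (-β - 1) : ℝ) : ℂ) =
      ξ * (∫ τ in Ioi (1 : ℝ), deriv h (τ * ξ) * ((τ ^ (-β) : ℝ) : ℂ)) + h ξ := by
  set F : ℝ → ℂ := fun τ => h (τ * ξ) * ((τ ^ (-β - 1) : ℝ) : ℂ)
  set F' : ℝ → ℂ := fun τ => deriv h (τ * ξ) * ((τ ^ (-β) : ℝ) : ℂ)
  have hF : IntegrableOn F (Ioi 1) :=
    integrableOn_Ioi_one_comp_mul_rpow (by linarith) hh.continuous.measurable hM ξ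
  have hF' : IntegrableOn F' (Ioi 1) :=
    integrableOn_Ioi_one_comp_mul_rpow (by linarith) (measurable_deriv h) hC ξ
  set g : ℝ → ℂ := fun τ => -(h (τ * ξ) * ((τ ^ (-β) : ℝ) : ℂ))
  have hg : ∀ τ ∈ Ici (1 : ℝ), HasDerivAt g (β * F τ - ξ * F' τ) τ := by
    intro τ hτ
    have hτ0 : (0 : ℝ) < τ := one_pos.trans_le hτ
    have hpow : HasDerivAt (fun t : ℝ => ((t ^ (-β) : ℝ) : ℂ)) ((-β * τ ^ (-β - 1) : ℝ)) τ :=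
      (Real.hasDerivAt_rpow_const (Or.inl hτ0.ne')).ofReal_comp
    refine (((hh (τ * ξ)).hasDerivAt.scomp τ (hasDerivAt_mul_const ξ)).mul hpow).neg
      |>.congr_deriv ?_
    simp only [F, F', Complex.real_smul, Complex.ofReal_mul, Complex.ofReal_neg]
    ring
  have hlim : Tendsto g atTop (𝓝 0) := by
    have hdecay : Tendsto (fun τ : ℝ => M * τ ^ (-β)) atTop (𝓝 0) := by
      simpa using (tendsto_rpow_neg_atTop (by linarith : 0 < β)).const_mul M
    refine squeeze_zero_norm' ?_ hdecay
    filter_upwards [eventually_gt_atTop 0] with τ hτ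
    rw [norm_neg]
    exact norm_mul_rpow_le hτ (hM _)
  have := integral_Ioi_of_hasDerivAt_of_tendsto' hg ((hF.const_mul _).sub (hF'.const_mul _)) hlim
  rw [integral_sub (hF.const_mul _) (hF'.const_mul _), integral_const_mul,
    integral_const_mul] at this
  simpa [g, sub_eq_iff_eq_add'] using this

theorem mul_deriv_eulerResolvent (hβ : 1 < β) (hh : Differentiable ℝ h)
    (hM : ∀ x, ‖h x‖ ≤ M) (hC : ∀ x, ‖deriv h x‖ ≤ C) (ξ : ℝ) :
    ξ * deriv (eulerResolvent β h) ξ = β * (eulerResolvent β h ξ - h ξ) := by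
  rw [(hasDerivAt_eulerResolvent hβ hh hM hC ξ).deriv, eulerResolvent,
    mul_integral_Ioi_one_comp_mul_rpow_eq hβ hh hM hC ξ]
  ring

end EulerResolvent

theorem IsAdmissible.eulerResolvent {β : ℝ} {h : ℝ → ℂ} (hh : IsAdmissible h) (hβ : 1 < β) :
    IsAdmissible (eulerResolvent β h) := by
  obtain ⟨C, hC⟩ := hh.bdd_deriv
  exact ⟨contDiff_eulerResolvent hβ hh.contDiff hh.norm_le_one hC,
    norm_eulerResolvent_le (by linarith) hh.norm_le_one, _,
    norm_deriv_eulerResolvent_le hβ hh.differentiable hh.norm_le_one hC⟩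

section EulerUniqueness

variable {β M : ℝ}

/- For fixed `ξ`, `t ↦ t ^ (-β) w (t ξ)` is constant on `(0, ∞)` and, `w` being bounded,
tends to `0` at infinity. -/
theorem eq_zero_of_mul_deriv_eq {w : ℝ → ℂ} (hβ : 0 < β) (hw : Differentiable ℝ w)
    (hM : ∀ x, ‖w x‖ ≤ M) (hode : ∀ x : ℝ, x * deriv w x = β * w x) : w = 0 := by
  funext ξ
  set k : ℝ → ℂ := fun t => w (t * ξ) * ((t ^ (-β) : ℝ) : ℂ)
  have hk : ∀ t > 0, HasDerivAt k 0 t := by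
    intro t ht
    have hpow : HasDerivAt (fun s : ℝ => ((s ^ (-β) : ℝ) : ℂ)) ((-β * t ^ (-β - 1) : ℝ)) t :=
      (Real.hasDerivAt_rpow_const (Or.inl ht.ne')).ofReal_comp
    refine (((hw (t * ξ)).hasDerivAt.scomp t (hasDerivAt_mul_const ξ)).mul hpow).congr_deriv ?_
    have := hode (t * ξ)
    rw [rpow_neg_eq_mul_rpow_neg_sub_one ht, Complex.real_smul]
    push_cast at this ⊢
    linear_combination ((t ^ (-β - 1) : ℝ) : ℂ) * this
  have hconst : ∀ t > 0, k t = w ξ := fun t ht => by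
    have := isOpen_Ioi.is_const_of_deriv_eq_zero isPreconnected_Ioi
      (fun s hs => (hk s hs).differentiableAt.differentiableWithinAt)
      (fun s hs => (hk s hs).deriv) (mem_Ioi.2 ht) (mem_Ioi.2 one_pos)
    simpa [k] using this
  have hdecay : Tendsto k atTop (𝓝 0) := by
    refine squeeze_zero_norm' ?_ (by simpa using (tendsto_rpow_neg_atTop hβ).const_mul M)
    filter_upwards [eventually_gt_atTop 0] with t ht
    exact norm_mul_rpow_le ht (hM _)
  exact tendsto_nhds_unique (tendsto_const_nhds.congr'
    ((eventually_gt_atTop 0).mono fun t ht => (hconst t ht).symm)) hdecay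

theorem eq_of_mul_deriv_eq_sub {h v₁ v₂ : ℝ → ℂ} {M₁ M₂ : ℝ} (hβ : 0 < β)
    (hv₁ : Differentiable ℝ v₁) (hv₂ : Differentiable ℝ v₂) (hM₁ : ∀ x, ‖v₁ x‖ ≤ M₁)
    (hM₂ : ∀ x, ‖v₂ x‖ ≤ M₂) (h₁ : ∀ x : ℝ, x * deriv v₁ x = β * (v₁ x - h x))
    (h₂ : ∀ x : ℝ, x * deriv v₂ x = β * (v₂ x - h x)) : v₁ = v₂ := by
  refine sub_eq_zero.1 (eq_zero_of_mul_deriv_eq hβ (hv₁.sub hv₂) (M := M₁ + M₂)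
    (fun x => (norm_sub_le _ _).trans (add_le_add (hM₁ x) (hM₂ x))) fun x => ?_)
  rw [Pi.sub_apply, deriv_sub (hv₁ x) (hv₂ x)]
  linear_combination h₁ x - h₂ x

end EulerUniqueness

theorem ft_eq_fourier (f : ℝ → ℝ) (ξ : ℝ) :
    ft f ξ = 𝓕 (fun v => (f v : ℂ)) ((2 * π)⁻¹ * ξ) := by
  rw [Real.fourier_real_eq_integral_exp_smul, ft]
  congr 1 with v
  rw [smul_eq_mul]
  congr 2
  push_cast
  field_simp

theorem isAdmissible_fourier {F : ℝ → ℂ} (hF : Integrable F) (hF1 : ∫ v, ‖F v‖ ≤ 1)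
    (hvF : Integrable fun v : ℝ => v • F v) : IsAdmissible (𝓕 F) := by
  refine ⟨Real.contDiff_fourier fun n hn => ?_, fun ξ => ?_,
    ∫ v : ℝ, ‖(-2 * π * Complex.I * v) • F v‖, fun ξ => ?_⟩
  · obtain rfl | rfl : n = 0 ∨ n = 1 := by
      have : n ≤ 1 := by exact_mod_cast hn
      omega
    · simpa using hF.norm
    · simpa [norm_smul] using hvF.norm
  · exact (VectorFourier.norm_fourierIntegral_le_integral_norm _ _ _ _ _).trans hF1
  · rw [Real.deriv_fourier hF hvF]
    exact VectorFourier.norm_fourierIntegral_le_integral_norm _ _ _ _ _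

theorem IsNormalized.integrable_mul {f : ℝ → ℝ} (hf : IsNormalized f) :
    Integrable fun v => v * f v := by
  obtain ⟨⟨hpos, hint, -⟩, -, hvar⟩ := hf
  have hsq : Integrable fun v => v ^ 2 * f v := by
    by_contra h
    rw [integral_undef h] at hvar
    exact zero_ne_one hvar
  refine (hint.add hsq).mono' (measurable_id.aestronglyMeasurable.mul hint.1) ?_
  refine Eventually.of_forall fun v => ?_
  rw [Real.norm_eq_abs, abs_mul, abs_of_nonneg (hpos v), Pi.add_apply, ← one_add_mul]
  have : |v| ≤ 1 + v ^ 2 := by nlinarith [sq_abs v, abs_nonneg v]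
  exact mul_le_mul_of_nonneg_right this (hpos v)

theorem IsNormalized.isAdmissible_ft {f : ℝ → ℝ} (hf : IsNormalized f) : IsAdmissible (ft f) := by
  have hvf := hf.integrable_mul
  obtain ⟨⟨hpos, hint, hmass⟩, -⟩ := hf
  have hF1 : ∫ v, ‖(f v : ℂ)‖ ≤ 1 := by
    simp_rw [Complex.norm_real, Real.norm_of_nonneg (hpos _)]
    exact hmass.le
  have hvF : Integrable fun v : ℝ => v • (f v : ℂ) := by
    simpa [Complex.real_smul] using hvf.ofReal (𝕜 := ℂ)
  rw [funext (ft_eq_fourier f)]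
  exact (isAdmissible_fourier hint.ofReal hF1 hvF).comp_const_mul _

noncomputable def schemeIterate (p q Δ β : ℝ) (u₀ : ℝ → ℂ) (j : ℕ) : ℝ → ℂ :=
  (fun u => eulerResolvent β (explicitTerm p q Δ u))^[j] u₀

section Scheme

variable {p q Δ β : ℝ} {u₀ : ℝ → ℂ}

theorem schemeIterate_succ (j : ℕ) : schemeIterate p q Δ β u₀ (j + 1) =
    eulerResolvent β (explicitTerm p q Δ (schemeIterate p q Δ β u₀ j)) :=
  Function.iterate_succ_apply' _ _ _

theorem isAdmissible_schemeIterate (hu₀ : IsAdmissible u₀) (hΔ0 : 0 ≤ Δ) (hΔ1 : Δ ≤ 1)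
    (hβ : 1 < β) (j : ℕ) : IsAdmissible (schemeIterate p q Δ β u₀ j) := by
  induction j with
  | zero => exact hu₀
  | succ j ih =>
    rw [schemeIterate_succ]
    exact (ih.explicitTerm p q hΔ0 hΔ1).eulerResolvent hβ

theorem schemeStep_iff {κ : ℝ} (hΔ : Δ ≠ 0) (hκ : κ * Δ * β = 1) (u : ℝ → ℂ) (v v' : ℂ)
    (ξ : ℝ) :
    (v - u ξ) / (Δ : ℂ) = κ * ξ * v' + u (p * ξ) * u (q * ξ) - u ξ ↔
      ξ * v' = β * (v - explicitTerm p q Δ u ξ) := by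
  have hκ' : (κ : ℂ) * Δ * β = 1 := by exact_mod_cast hκ
  have hβ : (β : ℂ) ≠ 0 := by
    rintro hβ
    simp [hβ] at hκ'
  rw [div_eq_iff (Complex.ofReal_ne_zero.2 hΔ), explicitTerm, Complex.ofReal_sub,
    Complex.ofReal_one]
  constructor <;> intro h
  · linear_combination -(β : ℂ) * h - ξ * v' * hκ'
  · refine mul_left_cancel₀ hβ ?_
    linear_combination -h - ξ * v' * hκ'

variable {T : ℝ} {N : ℕ}

theorem fourierScheme_schemeIterate (hu₀ : IsAdmissible u₀) (hΔ0 : 0 < T / N)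
    (hΔ1 : T / N ≤ 1) (hβ : 1 < β) (hκ : (1 - p ^ 2 - q ^ 2) / 2 * (T / N) * β = 1) :
    FourierScheme p q u₀ T N (schemeIterate p q (T / N) β u₀) := by
  refine ⟨rfl, fun j _ => ?_⟩
  have hφ := isAdmissible_schemeIterate (p := p) (q := q) hu₀ hΔ0.le hΔ1 hβ
  obtain ⟨C, hC⟩ := ((hφ j).explicitTerm p q hΔ0.le hΔ1).bdd_deriv
  refine ⟨(hφ (j + 1)).contDiff, ⟨1, (hφ (j + 1)).norm_le_one⟩, fun ξ => ?_⟩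
  rw [schemeStep_iff hΔ0.ne' hκ, schemeIterate_succ]
  exact mul_deriv_eulerResolvent hβ ((hφ j).explicitTerm p q hΔ0.le hΔ1).differentiable
    ((hφ j).explicitTerm p q hΔ0.le hΔ1).norm_le_one hC ξ

theorem FourierScheme.eq_schemeIterate {ψ : ℕ → ℝ → ℂ} (hψ : FourierScheme p q u₀ T N ψ)
    (hu₀ : IsAdmissible u₀) (hΔ0 : 0 < T / N) (hΔ1 : T / N ≤ 1) (hβ : 1 < β)
    (hκ : (1 - p ^ 2 - q ^ 2) / 2 * (T / N) * β = 1) :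
    ∀ j ≤ N, ψ j = schemeIterate p q (T / N) β u₀ j := by
  have hφ := fourierScheme_schemeIterate hu₀ hΔ0 hΔ1 hβ hκ
  intro j hj
  induction j with
  | zero => exact hψ.1
  | succ j ih =>
    obtain ⟨hψC, ⟨M, hM⟩, hψeq⟩ := hψ.2 j hj
    obtain ⟨hφC, ⟨M', hM'⟩, hφeq⟩ := hφ.2 j hj
    rw [ih (Nat.le_of_succ_le hj)] at hψeq
    exact eq_of_mul_deriv_eq_sub (zero_lt_one.trans hβ) (hψC.differentiable one_ne_zero)
      (hφC.differentiable one_ne_zero) hM hM'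
      (fun ξ => (schemeStep_iff hΔ0.ne' hκ _ _ _ ξ).1 (hψeq ξ))
      (fun ξ => (schemeStep_iff hΔ0.ne' hκ _ _ _ ξ).1 (hφeq ξ))

end Scheme

theorem stmt6_general (p q : ℝ) (hdiss : p ^ 2 + q ^ 2 < 1)
    (g₀ : ℝ → ℝ) (hg₀ : IsNormalized g₀)
    (T : ℝ) (hT : 0 < T) (N : ℕ) (hN : T < (N : ℝ)) :
    ∃ φ : ℕ → ℝ → ℂ, FourierScheme p q (ft g₀) T N φ ∧
      (∀ ψ : ℕ → ℝ → ℂ, FourierScheme p q (ft g₀) T N ψ → ∀ j ≤ N, ψ j = φ j) ∧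
      (∀ j < N, ∀ ξ : ℝ, ξ ≠ 0 →
        φ (j + 1) ξ =
          (((2 / (1 - p ^ 2 - q ^ 2)) / (T / (N : ℝ)) : ℝ) : ℂ) *
            ∫ τ in Set.Ioi (1 : ℝ),
              (((T / (N : ℝ) : ℝ) : ℂ) * (φ j (p * τ * ξ) * φ j (q * τ * ξ))
                  + ((1 - T / (N : ℝ) : ℝ) : ℂ) * φ j (τ * ξ)) *
                ((τ ^ (-((2 / (1 - p ^ 2 - q ^ 2)) / (T / (N : ℝ))) - 1) : ℝ) : ℂ)) := by
  set β := 2 / (1 - p ^ 2 - q ^ 2) / (T / N)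
  have hN0 : (0 : ℝ) < N := hT.trans hN
  have hΔ0 : 0 < T / N := div_pos hT hN0
  have hΔ1 : T / N < 1 := (div_lt_one hN0).2 hN
  have hd : 0 < 1 - p ^ 2 - q ^ 2 := by linarith
  have hβ : 1 < β := by
    have : 2 ≤ 2 / (1 - p ^ 2 - q ^ 2) := by
      rw [le_div_iff₀ hd]
      nlinarith [sq_nonneg p, sq_nonneg q]
    exact (one_lt_div hΔ0).2 (by linarith)
  have hκ : (1 - p ^ 2 - q ^ 2) / 2 * (T / N) * β = 1 := by
    simp only [β]
    field_simp
  have hu₀ := hg₀.isAdmissible_ft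
  refine ⟨schemeIterate p q (T / N) β (ft g₀), fourierScheme_schemeIterate hu₀ hΔ0 hΔ1.le hβ hκ,
    fun ψ hψ => hψ.eq_schemeIterate hu₀ hΔ0 hΔ1.le hβ hκ, fun j _ ξ _ => ?_⟩
  rw [schemeIterate_succ]
  simp only [eulerResolvent, explicitTerm, mul_assoc]

theorem stmt6 (p q : ℝ) (hq : 0 < q) (hqp : q ≤ p) (hdiss : p ^ 2 + q ^ 2 < 1)
    (g₀ : ℝ → ℝ) (hg₀ : IsNormalized g₀)
    (T : ℝ) (hT : 0 < T) (N : ℕ) (hN : T < (N : ℝ)) :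
    ∃ φ : ℕ → ℝ → ℂ, FourierScheme p q (ft g₀) T N φ ∧
      (∀ ψ : ℕ → ℝ → ℂ, FourierScheme p q (ft g₀) T N ψ → ∀ j ≤ N, ψ j = φ j) ∧
      (∀ j < N, ∀ ξ : ℝ, ξ ≠ 0 →
        φ (j + 1) ξ =
          (((2 / (1 - p ^ 2 - q ^ 2)) / (T / (N : ℝ)) : ℝ) : ℂ) *
            ∫ τ in Set.Ioi (1 : ℝ),
              (((T / (N : ℝ) : ℝ) : ℂ) * (φ j (p * τ * ξ) * φ j (q * τ * ξ))
                  + ((1 - T / (N : ℝ) : ℝ) : ℂ) * φ j (τ * ξ)) *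
                ((τ ^ (-((2 / (1 - p ^ 2 - q ^ 2)) / (T / (N : ℝ))) - 1) : ℝ) : ℂ)) :=
  stmt6_general p q hdiss g₀ hg₀ T hT N hN
end

section
/- Let g₀ be a normalized probability density on ℝ and suppose that s := √g₀ is square integrable with ∫_ℝ |ξ|^{2ν} |ŝ(ξ)|² dξ < ∞ for some ν > 0. Then |ξ|^ν |ĝ₀(ξ)| is bounded on ℝ; consequently there exist constants C > 0 and β > 0 such that |ĝ₀(ξ)| ≤ C (1 + β|ξ|)^{−ν} for all ξ ∈ ℝ. -/
open MeasureTheory Real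

/-!
Write `s = √g₀`, so that `ĝ₀(ξ)` is the value at `y = 0` of `H(y) = ∫ e^{-iξx} s(x) s(x+y) dx`.
`H` is integrable, and continuous at `0` because translation is continuous in `L²`. By Fubini and
the Fourier transform of a Gaussian, the average of `H` against the Gaussian approximate identity
equals `(2π)⁻¹ ∫ e^{-t²/(4π²c)} ŝ(ξ-t) ŝ(t) dt`; letting `c → ∞` gives
`2π |ĝ₀(ξ)| ≤ ∫ |ŝ(ξ-t)| |ŝ(t)| dt`, the inequality form of `ĝ₀ = (2π)⁻¹ ŝ * ŝ`.
Splitting `|ξ|^ν ≤ 2^ν (|ξ-t|^ν + |t|^ν)` and applying Cauchy–Schwarz to each half bounds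
`|ξ|^ν |ĝ₀(ξ)|` by a multiple of `‖|·|^ν ŝ‖₂ ‖ŝ‖₂`. The unit second moment makes `s` integrable,
so `ŝ` is bounded and continuous, and the weighted hypothesis then puts `ŝ` in `L²`.
Together with `|ĝ₀| ≤ 1` this gives the decay with `β = 1`.
-/

open Filter Topology
open scoped ENNReal Complex

lemma norm_cexp_neg_I_mul_ofReal_mul (a b : ℝ) : ‖cexp (-Complex.I * a * b)‖ = 1 := by
  rw [Complex.norm_exp]
  simp

lemma norm_ft_le (f : ℝ → ℝ) (ξ : ℝ) : ‖ft f ξ‖ ≤ ∫ v, |f v| := by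
  refine (norm_integral_le_integral_norm _).trans_eq ?_
  simp only [norm_mul, norm_cexp_neg_I_mul_ofReal_mul, one_mul, Complex.norm_real, Real.norm_eq_abs]

lemma integrable_cexp_mul_ofReal {f : ℝ → ℝ} (hf : Integrable f) (ξ : ℝ) :
    Integrable fun v : ℝ => cexp (-Complex.I * ξ * v) * f v :=
  hf.ofReal.bdd_mul (c := 1) (Continuous.aestronglyMeasurable (by fun_prop))
    (.of_forall fun v => (norm_cexp_neg_I_mul_ofReal_mul ξ v).le)

lemma continuous_ft {f : ℝ → ℝ} (hf : Integrable f) : Continuous (ft f) := by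
  refine continuous_of_dominated (fun ξ => ?_) (fun ξ => .of_forall fun v => ?_) hf.norm
    (.of_forall fun v => by fun_prop)
  · exact (Continuous.aestronglyMeasurable (by fun_prop)).mul hf.ofReal.aestronglyMeasurable
  · simp only [norm_mul, norm_cexp_neg_I_mul_ofReal_mul, one_mul, Complex.norm_real, le_refl]

lemma abs_add_rpow_le {ν : ℝ} (hν : 0 ≤ ν) (a b : ℝ) :
    |a + b| ^ ν ≤ 2 ^ ν * (|a| ^ ν + |b| ^ ν) := by
  have hmax : |a + b| ≤ 2 * max |a| |b| := by
    linarith [abs_add_le a b, le_max_left |a| |b|, le_max_right |a| |b|]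
  calc |a + b| ^ ν ≤ (2 * max |a| |b|) ^ ν := by gcongr
    _ = 2 ^ ν * max |a| |b| ^ ν := Real.mul_rpow zero_le_two (by positivity)
    _ ≤ 2 ^ ν * (|a| ^ ν + |b| ^ ν) := by
        gcongr
        rcases max_choice |a| |b| with h | h <;> rw [h]
        · exact le_add_of_nonneg_right (by positivity)
        · exact le_add_of_nonneg_left (by positivity)

lemma integral_mul_le_eLpNorm_mul_eLpNorm {α : Type*} [MeasurableSpace α] {μ : Measure α}
    {f g : α → ℝ} (hf : MemLp f 2 μ) (hg : MemLp g 2 μ) :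
    ∫ x, f x * g x ∂μ ≤ (eLpNorm f 2 μ).toReal * (eLpNorm g 2 μ).toReal := by
  calc ∫ x, f x * g x ∂μ = inner ℝ (hf.toLp f) (hg.toLp g) := by
        rw [L2.inner_def]
        refine integral_congr_ae ?_
        filter_upwards [hf.coeFn_toLp, hg.coeFn_toLp] with x hfx hgx
        simp [hfx, hgx, mul_comm]
    _ ≤ ‖hf.toLp f‖ * ‖hg.toLp g‖ := real_inner_le_norm _ _
    _ = _ := by rw [Lp.norm_toLp, Lp.norm_toLp]

lemma tendsto_eLpNorm_comp_add_right_sub {E : Type*} [NormedAddCommGroup E] {p : ℝ≥0∞}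
    [Fact (1 ≤ p)] (hp : p ≠ ∞) {f : ℝ → E} (hf : MemLp f p) :
    Tendsto (fun y => eLpNorm (fun x => f (x + y) - f x) p) (𝓝 0) (𝓝 0) := by
  let T : C(ℝ, C(ℝ, ℝ)) := ContinuousMap.curry ⟨fun q : ℝ × ℝ => q.2 + q.1, by fun_prop⟩
  have hT (y : ℝ) : MeasurePreserving (T y) := measurePreserving_add_right volume y
  have hcont : Continuous fun y => Lp.compMeasurePreserving (T y) (hT y) (hf.toLp f) :=
    continuous_const.compMeasurePreservingLp T.continuous hT hp
  have hcomp (y : ℝ) : Lp.compMeasurePreserving (T y) (hT y) (hf.toLp f) =ᵐ[volume]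
      fun x => f (x + y) :=
    (Lp.coeFn_compMeasurePreserving _ _).trans
      ((hT y).quasiMeasurePreserving.ae_eq_comp hf.coeFn_toLp)
  refine (tendsto_iff_edist_tendsto_0.1 (hcont.tendsto 0)).congr fun y => ?_
  rw [Lp.edist_def]
  refine eLpNorm_congr_ae ?_
  filter_upwards [hcomp y, hcomp 0] with x hy h0
  rw [Pi.sub_apply, hy, h0, add_zero]

lemma continuousAt_ft_mul_comp_add_right {s : ℝ → ℝ} (hs : MemLp s 2) (ξ : ℝ) :
    ContinuousAt (fun y => ft (fun x => s x * s (x + y)) ξ) 0 := by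
  have hshift (y : ℝ) : MemLp (fun x => s (x + y)) 2 :=
    hs.comp_measurePreserving (measurePreserving_add_right volume y)
  have hint (y : ℝ) : Integrable fun x => s x * s (x + y) := hs.integrable_mul (hshift y)
  have hbound (y : ℝ) : edist (ft (fun x => s x * s (x + y)) ξ) (ft (fun x => s x * s (x + 0)) ξ)
      ≤ eLpNorm s 2 * eLpNorm (fun x => s (x + y) - s x) 2 := by
    rw [edist_eq_enorm_sub, ft, ft, ← integral_sub
      (integrable_cexp_mul_ofReal (hint y) ξ) (integrable_cexp_mul_ofReal (hint 0) ξ)]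
    refine (enorm_integral_le_lintegral_enorm _).trans ?_
    rw [← eLpNorm_one_eq_lintegral_enorm]
    refine le_trans (le_of_eq (eLpNorm_congr_norm_ae (.of_forall fun x => ?_)))
      (eLpNorm_smul_le_mul_eLpNorm ((hshift y).sub hs).1 hs.1)
    simp only [← mul_sub, ← Complex.ofReal_sub, add_zero, norm_mul,
      norm_cexp_neg_I_mul_ofReal_mul, one_mul, Complex.norm_real]
    exact (norm_mul _ _).symm
  rw [ContinuousAt, tendsto_iff_edist_tendsto_0]
  have hlim := ENNReal.Tendsto.const_mul
    (tendsto_eLpNorm_comp_add_right_sub ENNReal.ofNat_ne_top hs) (Or.inr hs.eLpNorm_ne_top)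
  rw [mul_zero] at hlim
  exact tendsto_of_tendsto_of_tendsto_of_le_of_le tendsto_const_nhds hlim (fun _ => bot_le)
    hbound

noncomputable def gaussianWeight (c t : ℝ) : ℝ := rexp (-(4 * π ^ 2 * c)⁻¹ * t ^ 2)

/-- The kernel of `Real.tendsto_integral_gaussian_smul'` on `ℝ`; by
`integral_gaussianWeight_mul_cexp` it is `(2π)⁻¹` times the Fourier transform of
`gaussianWeight c`. -/
noncomputable def gaussianKernel (c y : ℝ) : ℝ := √(π * c) * rexp (-π ^ 2 * c * y ^ 2)

lemma integrable_gaussianWeight {c : ℝ} (hc : 0 < c) : Integrable (gaussianWeight c) :=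
  integrable_exp_neg_mul_sq (by positivity)

lemma norm_gaussianWeight_le_one (c t : ℝ) (hc : 0 ≤ c) : ‖(gaussianWeight c t : ℂ)‖ ≤ 1 := by
  rw [Complex.norm_real, gaussianWeight, Real.norm_of_nonneg (Real.exp_pos _).le,
    Real.exp_le_one_iff, neg_mul]
  exact neg_nonpos.2 (by positivity)

lemma norm_gaussianKernel_le (c y : ℝ) (hc : 0 ≤ c) : ‖(gaussianKernel c y : ℂ)‖ ≤ √(π * c) := by
  rw [Complex.norm_real, Real.norm_of_nonneg (by unfold gaussianKernel; positivity)]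
  refine mul_le_of_le_one_right (Real.sqrt_nonneg _) (Real.exp_le_one_iff.2 ?_)
  rw [neg_mul, neg_mul]
  exact neg_nonpos.2 (by positivity)

lemma tendsto_integral_gaussianKernel_mul {f : ℝ → ℂ} (hf : Integrable f)
    (hf0 : ContinuousAt f 0) :
    Tendsto (fun c => ∫ y, (gaussianKernel c y : ℂ) * f y) atTop (𝓝 (f 0)) := by
  refine (Real.tendsto_integral_gaussian_smul' hf hf0).congr' ?_
  filter_upwards [eventually_ge_atTop 0] with c hc
  refine integral_congr_ae (.of_forall fun y => ?_)
  have habs : ((|y| : ℝ) : ℂ) ^ 2 = (y : ℂ) ^ 2 := by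
    rw [← Complex.ofReal_pow, sq_abs, Complex.ofReal_pow]
  dsimp only
  rw [smul_eq_mul, Module.finrank_self, gaussianKernel, Real.sqrt_eq_rpow, Complex.ofReal_mul,
    Complex.ofReal_cpow (by positivity), Complex.ofReal_exp, zero_sub, norm_neg,
    Real.norm_eq_abs, habs]
  push_cast
  ring

lemma integral_gaussianWeight_mul_cexp {c : ℝ} (hc : 0 < c) (x : ℝ) :
    ∫ t : ℝ, (gaussianWeight c t : ℂ) * cexp (-Complex.I * t * x) = 2 * π * gaussianKernel c x := by
  have hb : 0 < (((4 * π ^ 2 * c)⁻¹ : ℝ) : ℂ).re := by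
    rw [Complex.ofReal_re]; positivity
  have hsqrt : √(π / (4 * π ^ 2 * c)⁻¹) = 2 * π * √(π * c) := by
    rw [show π / (4 * π ^ 2 * c)⁻¹ = (2 * π) ^ 2 * (π * c) by field_simp; ring,
      Real.sqrt_mul (by positivity), Real.sqrt_sq (by positivity)]
  calc ∫ t : ℝ, (gaussianWeight c t : ℂ) * cexp (-Complex.I * t * x)
      = ∫ t : ℝ, cexp (Complex.I * (-x : ℝ) * t) *
          cexp (-(((4 * π ^ 2 * c)⁻¹ : ℝ) : ℂ) * t ^ 2) := by
        refine integral_congr_ae (.of_forall fun t => ?_)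
        dsimp only
        rw [gaussianWeight, Complex.ofReal_exp, mul_comm]
        push_cast
        ring_nf
    _ = (π / (((4 * π ^ 2 * c)⁻¹ : ℝ) : ℂ)) ^ (1 / 2 : ℂ) *
          cexp (-((-x : ℝ) : ℂ) ^ 2 / (4 * (((4 * π ^ 2 * c)⁻¹ : ℝ) : ℂ))) :=
        fourierIntegral_gaussian hb _
    _ = 2 * π * gaussianKernel c x := by
        rw [← Complex.ofReal_div, show (1 / 2 : ℂ) = ((1 / 2 : ℝ) : ℂ) by push_cast; rfl,
          ← Complex.ofReal_cpow (by positivity), ← Real.sqrt_eq_rpow, hsqrt, gaussianKernel]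
        have hπ : (π : ℂ) ≠ 0 := Complex.ofReal_ne_zero.2 pi_ne_zero
        have hc' : (c : ℂ) ≠ 0 := Complex.ofReal_ne_zero.2 hc.ne'
        push_cast
        rw [mul_assoc]
        congr 3
        field_simp

lemma integrable_cexp_mul_shear {s : ℝ → ℝ} (hs : Integrable s) (ξ : ℝ) :
    Integrable (fun p : ℝ × ℝ => cexp (-Complex.I * ξ * p.1) * (s p.1 * s (p.1 + p.2) : ℝ))
      (volume.prod volume) := by
  refine ((measurePreserving_prod_add volume volume).integrable_comp_of_integrable
    ((integrable_cexp_mul_ofReal hs ξ).mul_prod hs.ofReal)).congr (.of_forall fun p => ?_)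
  simp [mul_assoc]

lemma integrable_gaussianWeight_mul_ft_integrand {s : ℝ → ℝ} (hs : Integrable s) (ξ : ℝ)
    {c : ℝ} (hc : 0 < c) :
    Integrable (Function.uncurry fun t (p : ℝ × ℝ) => (gaussianWeight c t : ℂ) *
        ((cexp (-Complex.I * (ξ - t : ℝ) * p.1) * s p.1) * (cexp (-Complex.I * t * p.2) * s p.2)))
      (volume.prod (volume.prod volume)) := by
  refine (((integrable_gaussianWeight hc).ofReal.mul_prod (hs.ofReal.mul_prod hs.ofReal)).bdd_mul
    (c := 1)
    (f := fun q => cexp (-Complex.I * (ξ - q.1 : ℝ) * q.2.1) * cexp (-Complex.I * q.1 * q.2.2))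
    (Continuous.aestronglyMeasurable (by fun_prop)) (.of_forall fun q => ?_)).congr
    (.of_forall fun q => ?_)
  · simp only [norm_mul, norm_cexp_neg_I_mul_ofReal_mul, mul_one, le_refl]
  · simp only [Function.uncurry, RCLike.ofReal_eq_complex_ofReal]
    ring

lemma integral_gaussianWeight_mul_ft_integrand (s : ℝ → ℝ) (ξ : ℝ) {c : ℝ} (hc : 0 < c)
    (u w : ℝ) :
    ∫ t, (gaussianWeight c t : ℂ) *
        ((cexp (-Complex.I * (ξ - t : ℝ) * u) * s u) * (cexp (-Complex.I * t * w) * s w))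
      = 2 * π * (cexp (-Complex.I * ξ * u) * (s u * s w : ℝ) * gaussianKernel c (w - u)) := by
  have hpt (t : ℝ) : (gaussianWeight c t : ℂ) *
      ((cexp (-Complex.I * (ξ - t : ℝ) * u) * s u) * (cexp (-Complex.I * t * w) * s w))
      = (cexp (-Complex.I * ξ * u) * (s u * s w : ℝ)) *
        ((gaussianWeight c t : ℂ) * cexp (-Complex.I * t * (w - u : ℝ))) := by
    have hphase : cexp (-Complex.I * (ξ - t : ℝ) * u) * cexp (-Complex.I * t * w)
        = cexp (-Complex.I * ξ * u) * cexp (-Complex.I * t * (w - u : ℝ)) := by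
      rw [← Complex.exp_add, ← Complex.exp_add]
      push_cast
      ring_nf
    rw [Complex.ofReal_mul]
    linear_combination ((gaussianWeight c t : ℂ) * s u * s w) * hphase
  simp_rw [hpt]
  rw [integral_const_mul, integral_gaussianWeight_mul_cexp hc]
  ring

lemma integral_gaussianWeight_mul_ft_mul_ft {s : ℝ → ℝ} (hs : Integrable s) (ξ : ℝ) {c : ℝ}
    (hc : 0 < c) :
    ∫ t, (gaussianWeight c t : ℂ) * (ft s (ξ - t) * ft s t)
      = 2 * π * ∫ y, (gaussianKernel c y : ℂ) * ft (fun x => s x * s (x + y)) ξ := by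
  have hshear : Integrable (fun q : ℝ × ℝ => (gaussianKernel c q.2 : ℂ) *
      (cexp (-Complex.I * ξ * q.1) * (s q.1 * s (q.1 + q.2) : ℝ))) (volume.prod volume) :=
    (integrable_cexp_mul_shear hs ξ).bdd_mul (Continuous.aestronglyMeasurable
      (by unfold gaussianKernel; fun_prop)) (.of_forall fun q => norm_gaussianKernel_le c q.2 hc.le)
  calc ∫ t, (gaussianWeight c t : ℂ) * (ft s (ξ - t) * ft s t)
      = ∫ t, ∫ p : ℝ × ℝ, (gaussianWeight c t : ℂ) *
          ((cexp (-Complex.I * (ξ - t : ℝ) * p.1) * s p.1) *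
            (cexp (-Complex.I * t * p.2) * s p.2)) ∂(volume.prod volume) := by
        refine integral_congr_ae (.of_forall fun t => ?_)
        dsimp only
        rw [integral_const_mul]
        exact congrArg _ (integral_prod_mul (fun u : ℝ => cexp (-Complex.I * (ξ - t : ℝ) * u) * s u)
          (fun w : ℝ => cexp (-Complex.I * t * w) * s w)).symm
    _ = ∫ p : ℝ × ℝ, (∫ t, (gaussianWeight c t : ℂ) *
          ((cexp (-Complex.I * (ξ - t : ℝ) * p.1) * s p.1) *
            (cexp (-Complex.I * t * p.2) * s p.2))) ∂(volume.prod volume) :=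
        integral_integral_swap (integrable_gaussianWeight_mul_ft_integrand hs ξ hc)
    _ = ∫ p : ℝ × ℝ, 2 * π * (cexp (-Complex.I * ξ * p.1) * (s p.1 * s p.2 : ℝ) *
          gaussianKernel c (p.2 - p.1)) ∂(volume.prod volume) :=
        integral_congr_ae (.of_forall fun p => integral_gaussianWeight_mul_ft_integrand s ξ hc _ _)
    _ = ∫ q : ℝ × ℝ, 2 * π * ((gaussianKernel c q.2 : ℂ) *
          (cexp (-Complex.I * ξ * q.1) * (s q.1 * s (q.1 + q.2) : ℝ))) ∂(volume.prod volume) := by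
        rw [← (measurePreserving_prod_add volume volume).integral_comp
          (MeasurableEquiv.shearAddRight ℝ).measurableEmbedding]
        refine integral_congr_ae (.of_forall fun q => ?_)
        simp only [add_sub_cancel_left]
        ring
    _ = 2 * π * ∫ y, (gaussianKernel c y : ℂ) * ft (fun x => s x * s (x + y)) ξ := by
        rw [integral_const_mul, integral_prod_symm _ hshear]
        simp_rw [integral_const_mul]
        rfl

theorem two_pi_mul_norm_ft_mul_self_le {s : ℝ → ℝ} (hs : Integrable s) (hs2 : MemLp s 2)
    (hŝ : MemLp (ft s) 2) (ξ : ℝ) :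
    2 * π * ‖ft (fun v => s v * s v) ξ‖ ≤ ∫ t, ‖ft s (ξ - t)‖ * ‖ft s t‖ := by
  have hH : Integrable fun y => ft (fun x => s x * s (x + y)) ξ :=
    (integrable_cexp_mul_shear hs ξ).integral_prod_right
  have hconv : Integrable fun t => ‖ft s (ξ - t)‖ * ‖ft s t‖ :=
    (hŝ.comp_measurePreserving (Measure.measurePreserving_sub_left volume ξ)).norm.integrable_mul
      hŝ.norm
  have hlim := ((tendsto_integral_gaussianKernel_mul hH
    (continuousAt_ft_mul_comp_add_right hs2 ξ)).const_mul (2 * π : ℂ)).norm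
  have key := le_of_tendsto hlim <| by
    filter_upwards [eventually_gt_atTop 0] with c hc
    rw [← integral_gaussianWeight_mul_ft_mul_ft hs ξ hc]
    refine norm_integral_le_of_norm_le hconv (.of_forall fun t => ?_)
    rw [norm_mul, norm_mul]
    exact mul_le_of_le_one_left (by positivity) (norm_gaussianWeight_le_one c t hc.le)
  simpa only [add_zero, norm_mul, Complex.norm_ofNat, Complex.norm_real, Real.norm_eq_abs,
    abs_of_pos pi_pos] using key

lemma rpow_mul_integral_mul_comp_sub_le {h : ℝ → ℝ} (hh : ∀ t, 0 ≤ h t) {ν : ℝ} (hν : 0 ≤ ν)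
    (h2 : MemLp h 2) (hw : MemLp (fun t => |t| ^ ν * h t) 2) (ξ : ℝ) :
    |ξ| ^ ν * ∫ t, h (ξ - t) * h t ≤
      2 ^ ν * (2 * ((eLpNorm (fun t => |t| ^ ν * h t) 2).toReal * (eLpNorm h 2).toReal)) := by
  have hrefl := Measure.measurePreserving_sub_left volume ξ
  have h2' : MemLp (fun t => h (ξ - t)) 2 := h2.comp_measurePreserving hrefl
  have hw' : MemLp (fun t => |ξ - t| ^ ν * h (ξ - t)) 2 := hw.comp_measurePreserving hrefl
  have i0 : Integrable fun t => h (ξ - t) * h t := h2'.integrable_mul h2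
  have i1 : Integrable fun t => |ξ - t| ^ ν * h (ξ - t) * h t := hw'.integrable_mul h2
  have i2 : Integrable fun t => h (ξ - t) * (|t| ^ ν * h t) := h2'.integrable_mul hw
  have hpt (t : ℝ) : |ξ| ^ ν * (h (ξ - t) * h t) ≤
      2 ^ ν * (|ξ - t| ^ ν * h (ξ - t) * h t + h (ξ - t) * (|t| ^ ν * h t)) := by
    have := mul_le_mul_of_nonneg_right (abs_add_rpow_le hν (ξ - t) t)
      (mul_nonneg (hh (ξ - t)) (hh t))
    rw [sub_add_cancel] at this
    linarith
  have hI1 : ∫ t, |ξ - t| ^ ν * h (ξ - t) * h t ≤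
      (eLpNorm (fun t => |t| ^ ν * h t) 2).toReal * (eLpNorm h 2).toReal := by
    refine (integral_mul_le_eLpNorm_mul_eLpNorm hw' h2).trans_eq ?_
    rw [← eLpNorm_comp_measurePreserving hw.1 hrefl]
    rfl
  have hI2 : ∫ t, h (ξ - t) * (|t| ^ ν * h t) ≤
      (eLpNorm (fun t => |t| ^ ν * h t) 2).toReal * (eLpNorm h 2).toReal := by
    refine (integral_mul_le_eLpNorm_mul_eLpNorm h2' hw).trans_eq ?_
    rw [mul_comm, ← eLpNorm_comp_measurePreserving h2.1 hrefl]
    rfl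
  calc |ξ| ^ ν * (∫ t, h (ξ - t) * h t)
      = ∫ t, |ξ| ^ ν * (h (ξ - t) * h t) := (integral_const_mul _ _).symm
    _ ≤ ∫ t, 2 ^ ν * (|ξ - t| ^ ν * h (ξ - t) * h t + h (ξ - t) * (|t| ^ ν * h t)) :=
        integral_mono (i0.const_mul _) ((i1.add i2).const_mul _) hpt
    _ = 2 ^ ν * ((∫ t, |ξ - t| ^ ν * h (ξ - t) * h t) + ∫ t, h (ξ - t) * (|t| ^ ν * h t)) := by
        rw [integral_const_mul, integral_add i1 i2]
    _ ≤ _ := by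
        gcongr
        linarith

lemma rpow_mul_norm_ft_mul_self_le {s : ℝ → ℝ} (hs : Integrable s) (hs2 : MemLp s 2) {ν : ℝ}
    (hν : 0 ≤ ν) (hŝ : MemLp (ft s) 2) (hw : MemLp (fun t => |t| ^ ν * ‖ft s t‖) 2) (ξ : ℝ) :
    |ξ| ^ ν * ‖ft (fun v => s v * s v) ξ‖ ≤ (2 * π)⁻¹ * (2 ^ ν * (2 *
      ((eLpNorm (fun t => |t| ^ ν * ‖ft s t‖) 2).toReal * (eLpNorm (‖ft s ·‖) 2).toReal))) := by
  calc |ξ| ^ ν * ‖ft (fun v => s v * s v) ξ‖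
      = (2 * π)⁻¹ * (|ξ| ^ ν * (2 * π * ‖ft (fun v => s v * s v) ξ‖)) := by
        field_simp
    _ ≤ (2 * π)⁻¹ * (|ξ| ^ ν * ∫ t, ‖ft s (ξ - t)‖ * ‖ft s t‖) := by
        gcongr
        exact two_pi_mul_norm_ft_mul_self_le hs hs2 hŝ ξ
    _ ≤ _ := mul_le_mul_of_nonneg_left
        (rpow_mul_integral_mul_comp_sub_le (fun t => norm_nonneg _) hν hŝ.norm hw ξ) (by positivity)

lemma integrable_sqrt_of_integrable_sq_mul {g : ℝ → ℝ} (hg0 : ∀ v, 0 ≤ g v) (hg : Integrable g)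
    (hg2 : Integrable fun v => v ^ 2 * g v) : Integrable fun v => √(g v) := by
  refine (((hg.add hg2).add integrable_inv_one_add_sq).div_const 2).mono'
    (Real.continuous_sqrt.comp_aestronglyMeasurable hg.1) (.of_forall fun v => ?_)
  have ha : 0 < 1 + v ^ 2 := by positivity
  have hsplit : √(g v * (1 + v ^ 2)) * √((1 + v ^ 2)⁻¹) = √(g v) := by
    rw [← Real.sqrt_mul (mul_nonneg (hg0 v) ha.le), mul_assoc, mul_inv_cancel₀ ha.ne', mul_one]
  have hamgm := two_mul_le_add_sq (√(g v * (1 + v ^ 2))) (√((1 + v ^ 2)⁻¹))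
  rw [Real.sq_sqrt (mul_nonneg (hg0 v) ha.le), Real.sq_sqrt (inv_nonneg.2 ha.le), mul_assoc,
    hsplit] at hamgm
  rw [Real.norm_of_nonneg (Real.sqrt_nonneg _)]
  simp only [Pi.add_apply]
  linarith

lemma integrable_of_integrable_rpow_mul {F : ℝ → ℝ} (hF : AEStronglyMeasurable F)
    (hF0 : ∀ t, 0 ≤ F t) {K : ℝ} (hFK : ∀ t, F t ≤ K) {α : ℝ} (hα : 0 ≤ α)
    (hw : Integrable fun t => |t| ^ α * F t) : Integrable F := by
  refine (((integrableOn_const (measure_Icc_lt_top (a := -1) (b := 1)).ne).integrable_indicator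
    measurableSet_Icc).add hw).mono' hF (.of_forall fun t => ?_)
  rw [Real.norm_of_nonneg (hF0 t), Pi.add_apply]
  by_cases ht : t ∈ Set.Icc (-1 : ℝ) 1
  · rw [Set.indicator_of_mem ht]
    have := mul_nonneg (Real.rpow_nonneg (abs_nonneg t) α) (hF0 t)
    linarith [hFK t]
  · rw [Set.indicator_of_notMem ht, zero_add]
    have h1 : 1 ≤ |t| := by
      by_contra h
      exact ht (Set.mem_Icc.2 (abs_le.1 (not_le.1 h).le))
    exact le_mul_of_one_le_left (hF0 t) (Real.one_le_rpow h1 hα)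

lemma le_mul_one_add_rpow_neg {r M ν ξ : ℝ} (hν : 0 ≤ ν) (hr0 : 0 ≤ r) (hr1 : r ≤ 1)
    (hrM : |ξ| ^ ν * r ≤ M) : r ≤ 2 ^ ν * (M + 1) * (1 + |ξ|) ^ (-ν) := by
  have hpos : 0 < (1 + |ξ|) ^ ν := by positivity
  rw [Real.rpow_neg (by positivity), ← div_eq_mul_inv, le_div_iff₀ hpos]
  have h := abs_add_rpow_le hν 1 |ξ|
  rw [abs_one, Real.one_rpow, abs_abs, abs_of_nonneg (by positivity : (0:ℝ) ≤ 1 + |ξ|)] at h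
  calc r * (1 + |ξ|) ^ ν ≤ r * (2 ^ ν * (1 + |ξ| ^ ν)) := by gcongr
    _ = 2 ^ ν * (r + |ξ| ^ ν * r) := by ring
    _ ≤ 2 ^ ν * (M + 1) := mul_le_mul_of_nonneg_left (by linarith) (by positivity)

lemma memLp_two_of_integrable_rpow_mul_norm_sq {f : ℝ → ℂ} (hf : Continuous f) {K : ℝ}
    (hfK : ∀ t, ‖f t‖ ≤ K) {α : ℝ} (hα : 0 ≤ α) (h : Integrable fun t => |t| ^ α * ‖f t‖ ^ 2) :
    MemLp f 2 :=
  (memLp_two_iff_integrable_sq_norm hf.aestronglyMeasurable).2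
    (integrable_of_integrable_rpow_mul (hf.norm.pow 2).aestronglyMeasurable
      (fun t => by positivity) (fun t => pow_le_pow_left₀ (norm_nonneg _) (hfK t) 2) hα h)

lemma memLp_two_rpow_mul_norm {f : ℝ → ℂ} (hf : Continuous f) {ν : ℝ} (hν : 0 ≤ ν)
    (h : Integrable fun t => |t| ^ (2 * ν) * ‖f t‖ ^ 2) :
    MemLp (fun t => |t| ^ ν * ‖f t‖) 2 := by
  refine (memLp_two_iff_integrable_sq (Continuous.aestronglyMeasurable ?_)).2
    (h.congr (.of_forall fun t => ?_))
  · exact (continuous_abs.rpow_const fun _ => Or.inr hν).mul hf.norm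
  · dsimp only
    rw [mul_pow, ← Real.rpow_mul_natCast (abs_nonneg t)]
    ring_nf

theorem stmt10_general (g₀ : ℝ → ℝ) (hg₀ : IsNormalized g₀)
    (ν : ℝ) (hν : 0 < ν)
    (hsqrt : Integrable (fun ξ : ℝ =>
      |ξ| ^ (2 * ν) * ‖ft (fun v => Real.sqrt (g₀ v)) ξ‖ ^ 2)) :
    (∃ M : ℝ, ∀ ξ : ℝ, |ξ| ^ ν * ‖ft g₀ ξ‖ ≤ M) ∧
    ∃ C > (0 : ℝ), ∃ β > (0 : ℝ), ∀ ξ : ℝ,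
      ‖ft g₀ ξ‖ ≤ C * (1 + β * |ξ|) ^ (-ν) := by
  obtain ⟨⟨hg0, hg, hmass⟩, -, hvar⟩ := hg₀
  set s := fun v => √(g₀ v)
  have hs : Integrable s := integrable_sqrt_of_integrable_sq_mul hg0 hg
    (Integrable.of_integral_ne_zero (by rw [hvar]; exact one_ne_zero))
  have hs2 : MemLp s 2 := (memLp_two_iff_integrable_sq hs.1).2
    (hg.congr (.of_forall fun v => (Real.sq_sqrt (hg0 v)).symm))
  have hŝ : MemLp (ft s) 2 := memLp_two_of_integrable_rpow_mul_norm_sq (continuous_ft hs)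
    (norm_ft_le s) (by positivity) hsqrt
  have hsq : (fun v => s v * s v) = g₀ := funext fun v => Real.mul_self_sqrt (hg0 v)
  obtain ⟨M, hM⟩ : ∃ M, ∀ ξ, |ξ| ^ ν * ‖ft g₀ ξ‖ ≤ M := ⟨_, fun ξ => hsq ▸
    rpow_mul_norm_ft_mul_self_le hs hs2 hν.le hŝ
      (memLp_two_rpow_mul_norm (continuous_ft hs) hν.le hsqrt) ξ⟩
  have hĝ (ξ : ℝ) : ‖ft g₀ ξ‖ ≤ 1 := by
    simpa only [abs_of_nonneg (hg0 _), hmass] using norm_ft_le g₀ ξ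
  have hM0 : 0 ≤ M := (by positivity : (0 : ℝ) ≤ |0| ^ ν * ‖ft g₀ 0‖).trans (hM 0)
  refine ⟨⟨M, hM⟩, 2 ^ ν * (M + 1), by positivity, 1, one_pos, fun ξ => ?_⟩
  rw [one_mul]
  exact le_mul_one_add_rpow_neg hν.le (norm_nonneg _) (hĝ ξ) (hM ξ)

theorem stmt10 (g₀ : ℝ → ℝ) (hg₀ : IsNormalized g₀)
    (hs2 : MemLp (fun v => Real.sqrt (g₀ v)) 2 (volume : Measure ℝ))
    (ν : ℝ) (hν : 0 < ν)
    (hsqrt : Integrable (fun ξ : ℝ =>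
      |ξ| ^ (2 * ν) * ‖ft (fun v => Real.sqrt (g₀ v)) ξ‖ ^ 2)) :
    (∃ M : ℝ, ∀ ξ : ℝ, |ξ| ^ ν * ‖ft g₀ ξ‖ ≤ M) ∧
    ∃ C > (0 : ℝ), ∃ β > (0 : ℝ), ∀ ξ : ℝ,
      ‖ft g₀ ξ‖ ≤ C * (1 + β * |ξ|) ^ (-ν) :=
  stmt10_general g₀ hg₀ ν hν hsqrt
end

section
/- Let p, q > 0 with p + q = 1 and define Ĝ : ℝ → ℝ by Ĝ(ξ) = (1 + |ξ|) e^{−|ξ|}. Then for every ξ ∈ ℝ, Ĝ(pξ)Ĝ(qξ) − Ĝ(ξ) = pq ξ² e^{−|ξ|}; moreover Ĝ is differentiable with Ĝ′(ξ) = −ξ e^{−|ξ|}, so Ĝ satisfies the stationary scaled equation Ĝ(pξ)Ĝ(qξ) − Ĝ(ξ) = −pq ξ Ĝ′(ξ) for all ξ ∈ ℝ. -/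
open MeasureTheory Real

/-- `Ĝ(ξ) = (1 + |ξ|) e^{−|ξ|}`. -/
noncomputable def Ghat (ξ : ℝ) : ℝ := (1 + |ξ|) * Real.exp (-|ξ|)

/-!
Write `Ĝ(ξ) = h(|ξ|)` with `h(y) = (1 + y) e^{-y}`. Since `p + q = 1` and `p, q ≥ 0`, the
exponentials in `Ĝ(pξ) Ĝ(qξ)` multiply to `e^{-|ξ|}` and the prefactors to
`(1 + p|ξ|)(1 + q|ξ|) = 1 + |ξ| + pq ξ²`. Away from `0` the chain rule gives
`Ĝ′(ξ) = h′(|ξ|) sign ξ = -ξ e^{-|ξ|}`; at `0` the kink of `|·|` is invisible because `h′(0) = 0`.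
-/

theorem HasDerivAt.comp_abs_zero {f : ℝ → ℝ} (hf : HasDerivAt f 0 0) :
    HasDerivAt (fun x ↦ f |x|) 0 0 := by
  have hright : HasDerivWithinAt (fun x ↦ f |x|) 0 (Set.Ici 0) 0 :=
    hf.hasDerivWithinAt.congr (fun x hx ↦ by rw [abs_of_nonneg hx]) (by simp)
  have hleft : HasDerivWithinAt (fun x ↦ f |x|) 0 (Set.Iic 0) 0 := by
    have hneg : HasDerivAt (fun x ↦ f (-x)) 0 0 := by
      have h := hf.comp_of_eq 0 (hasDerivAt_neg 0) neg_zero.symm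
      rwa [zero_mul] at h
    exact hneg.hasDerivWithinAt.congr (fun x hx ↦ by rw [abs_of_nonpos hx]) (by simp)
  rw [← hasDerivWithinAt_univ, ← Set.Iic_union_Ici]
  exact hleft.union hright

theorem hasDerivAt_one_add_mul_exp_neg (y : ℝ) :
    HasDerivAt (fun y ↦ (1 + y) * exp (-y)) (-y * exp (-y)) y := by
  refine (((hasDerivAt_id' y).const_add 1).mul (hasDerivAt_neg y).exp).congr_deriv ?_
  ring

theorem hasDerivAt_Ghat (ξ : ℝ) : HasDerivAt Ghat (-ξ * exp (-|ξ|)) ξ := by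
  rcases eq_or_ne ξ 0 with rfl | hξ
  · have h0 := hasDerivAt_one_add_mul_exp_neg 0
    rw [neg_zero, zero_mul] at h0 ⊢
    exact h0.comp_abs_zero
  · refine ((hasDerivAt_one_add_mul_exp_neg |ξ|).comp ξ (hasDerivAt_abs hξ)).congr_deriv ?_
    rw [mul_right_comm, neg_mul, abs_mul_sign]

theorem Ghat_mul_Ghat_sub_Ghat {p q : ℝ} (hp : 0 ≤ p) (hq : 0 ≤ q) (hpq : p + q = 1) (ξ : ℝ) :
    Ghat (p * ξ) * Ghat (q * ξ) - Ghat ξ = p * q * ξ ^ 2 * exp (-|ξ|) := by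
  have habs_p : |p * ξ| = p * |ξ| := by rw [abs_mul, abs_of_nonneg hp]
  have habs_q : |q * ξ| = q * |ξ| := by rw [abs_mul, abs_of_nonneg hq]
  have hexp : exp (-|p * ξ|) * exp (-|q * ξ|) = exp (-|ξ|) := by
    rw [← exp_add, habs_p, habs_q]
    congr 1
    linear_combination -|ξ| * hpq
  have hpoly : (1 + |p * ξ|) * (1 + |q * ξ|) = 1 + |ξ| + p * q * ξ ^ 2 := by
    rw [habs_p, habs_q]
    linear_combination |ξ| * hpq + p * q * sq_abs ξ
  calc Ghat (p * ξ) * Ghat (q * ξ) - Ghat ξ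
      = (1 + |p * ξ|) * (1 + |q * ξ|) * (exp (-|p * ξ|) * exp (-|q * ξ|)) - Ghat ξ := by
        unfold Ghat; ring
    _ = p * q * ξ ^ 2 * exp (-|ξ|) := by rw [hexp, hpoly, Ghat]; ring

theorem stmt15 (p q : ℝ) (hp : 0 < p) (hq : 0 < q) (hpq : p + q = 1) :
    (∀ ξ : ℝ, Ghat (p * ξ) * Ghat (q * ξ) - Ghat ξ = p * q * ξ ^ 2 * Real.exp (-|ξ|)) ∧
    (∀ ξ : ℝ, HasDerivAt Ghat (-ξ * Real.exp (-|ξ|)) ξ) ∧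
    (∀ ξ : ℝ, Ghat (p * ξ) * Ghat (q * ξ) - Ghat ξ = -(p * q * ξ) * deriv Ghat ξ) := by
  have hgain := Ghat_mul_Ghat_sub_Ghat hp.le hq.le hpq
  refine ⟨hgain, hasDerivAt_Ghat, fun ξ ↦ ?_⟩
  rw [(hasDerivAt_Ghat ξ).deriv, hgain]
  ring
end

section
/- Let 0 < q ≤ p, η ≥ 0, and let u : ℝ → ℂ be measurable with |u(ξ)| ≤ 1 for all ξ ∈ ℝ. Then ∫_ℝ |ξ|^{2η} |u(pξ)|² |u(qξ)|² dξ ≤ (1/2)(q^{−(2η+1)} + p^{−(2η+1)}) ∫_ℝ |ξ|^{2η} |u(ξ)|² dξ. -/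
open MeasureTheory Real

/-
Since `|u| ≤ 1`, the product of `a = |u(pξ)|²` and `b = |u(qξ)|²` is at most
`min a b ≤ (a + b) / 2`. Each of the two resulting integrals is the weighted integral of `|u|²`
after the dilation `ξ ↦ cξ`, which multiplies it by `c^{-(2η+1)}`: a factor `c^{-2η}` from the
weight and `c⁻¹` from the Jacobian.
-/

open scoped ENNReal

lemma lintegral_comp_mul_left {c : ℝ} (hc : c ≠ 0) (F : ℝ → ℝ≥0∞) :
    ∫⁻ x, F (c * x) = ENNReal.ofReal |c⁻¹| * ∫⁻ x, F x := by
  rw [← (measurableEmbedding_mulLeft₀ hc).lintegral_map, Real.map_volume_mul_left hc,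
    lintegral_smul_measure, smul_eq_mul]

lemma lintegral_rpow_abs_mul_comp_mul_left {c : ℝ} (hc : c ≠ 0) (s : ℝ) (g : ℝ → ℝ) :
    ∫⁻ x, ENNReal.ofReal (|x| ^ s * g (c * x)) =
      ENNReal.ofReal (|c| ^ (-(s + 1))) * ∫⁻ x, ENNReal.ofReal (|x| ^ s * g x) := by
  have hc' : 0 < |c| := abs_pos.2 hc
  have hweight : ∀ x : ℝ, ENNReal.ofReal (|x| ^ s * g (c * x)) =
      ENNReal.ofReal (|c| ^ (-s)) * ENNReal.ofReal (|c * x| ^ s * g (c * x)) := fun x => by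
    rw [← ENNReal.ofReal_mul (Real.rpow_nonneg hc'.le _), ← mul_assoc, abs_mul,
      Real.mul_rpow hc'.le (abs_nonneg x), ← mul_assoc, ← Real.rpow_add hc', neg_add_cancel,
      Real.rpow_zero, one_mul]
  simp_rw [hweight]
  rw [lintegral_const_mul' _ _ ENNReal.ofReal_ne_top,
    lintegral_comp_mul_left hc (fun y => ENNReal.ofReal (|y| ^ s * g y)), ← mul_assoc,
    ← ENNReal.ofReal_mul (Real.rpow_nonneg hc'.le _), abs_inv, neg_add, Real.rpow_add hc',
    Real.rpow_neg_one]

lemma mul_le_add_div_two_of_mem_Icc {x y : ℝ} (hx : x ∈ Set.Icc (0 : ℝ) 1)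
    (hy : y ∈ Set.Icc (0 : ℝ) 1) : x * y ≤ (x + y) / 2 := by
  obtain ⟨hx0, hx1⟩ := hx
  obtain ⟨hy0, hy1⟩ := hy
  nlinarith [mul_le_of_le_one_right hx0 hy1, mul_le_of_le_one_left hy0 hx1]

theorem stmt18_general (p q : ℝ) (hq : 0 < q) (hqp : q ≤ p) (η : ℝ)
    (u : ℝ → ℂ) (humeas : Measurable u) (hu : ∀ ξ, ‖u ξ‖ ≤ 1) :
    (∫⁻ ξ : ℝ, ENNReal.ofReal
        (|ξ| ^ (2 * η) * ‖u (p * ξ)‖ ^ 2 * ‖u (q * ξ)‖ ^ 2)) ≤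
      ENNReal.ofReal ((1 / 2) * (q ^ (-(2 * η + 1)) + p ^ (-(2 * η + 1)))) *
        ∫⁻ ξ : ℝ, ENNReal.ofReal (|ξ| ^ (2 * η) * ‖u ξ‖ ^ 2) := by
  have hp : 0 < p := hq.trans_le hqp
  have hu2 : ∀ ξ, ‖u ξ‖ ^ 2 ∈ Set.Icc (0 : ℝ) 1 := fun ξ =>
    ⟨by positivity, pow_le_one₀ (norm_nonneg _) (hu ξ)⟩
  have hpointwise : ∀ ξ, ENNReal.ofReal (|ξ| ^ (2 * η) * ‖u (p * ξ)‖ ^ 2 * ‖u (q * ξ)‖ ^ 2) ≤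
      ENNReal.ofReal (1 / 2) * ENNReal.ofReal (|ξ| ^ (2 * η) * ‖u (p * ξ)‖ ^ 2) +
        ENNReal.ofReal (1 / 2) * ENNReal.ofReal (|ξ| ^ (2 * η) * ‖u (q * ξ)‖ ^ 2) := fun ξ => by
    rw [← ENNReal.ofReal_mul (by norm_num), ← ENNReal.ofReal_mul (by norm_num),
      ← ENNReal.ofReal_add (by positivity) (by positivity)]
    refine ENNReal.ofReal_le_ofReal ?_
    nlinarith [mul_le_mul_of_nonneg_left
      (mul_le_add_div_two_of_mem_Icc (hu2 (p * ξ)) (hu2 (q * ξ)))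
      (by positivity : (0 : ℝ) ≤ |ξ| ^ (2 * η))]
  have hscale : ∀ c : ℝ, 0 < c → ∫⁻ ξ : ℝ, ENNReal.ofReal (|ξ| ^ (2 * η) * ‖u (c * ξ)‖ ^ 2) =
      ENNReal.ofReal (c ^ (-(2 * η + 1))) * ∫⁻ ξ : ℝ, ENNReal.ofReal (|ξ| ^ (2 * η) * ‖u ξ‖ ^ 2) :=
    fun c hc => by
      simpa only [abs_of_pos hc] using
        lintegral_rpow_abs_mul_comp_mul_left hc.ne' (2 * η) (fun y => ‖u y‖ ^ 2)
  calc _ ≤ _ := lintegral_mono hpointwise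
    _ = _ := by
      rw [lintegral_add_left (by fun_prop), lintegral_const_mul' _ _ ENNReal.ofReal_ne_top,
        lintegral_const_mul' _ _ ENNReal.ofReal_ne_top,
        hscale p hp, hscale q hq, ENNReal.ofReal_mul (by norm_num),
        ENNReal.ofReal_add (by positivity) (by positivity)]
      ring

theorem stmt18 (p q : ℝ) (hq : 0 < q) (hqp : q ≤ p) (η : ℝ) (hη : 0 ≤ η)
    (u : ℝ → ℂ) (humeas : Measurable u) (hu : ∀ ξ, ‖u ξ‖ ≤ 1) :
    (∫⁻ ξ : ℝ, ENNReal.ofReal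
        (|ξ| ^ (2 * η) * ‖u (p * ξ)‖ ^ 2 * ‖u (q * ξ)‖ ^ 2)) ≤
      ENNReal.ofReal ((1 / 2) * (q ^ (-(2 * η + 1)) + p ^ (-(2 * η + 1)))) *
        ∫⁻ ξ : ℝ, ENNReal.ofReal (|ξ| ^ (2 * η) * ‖u ξ‖ ^ 2) :=
  stmt18_general p q hq hqp η u humeas hu
end
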